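/- arXiv:2112.00865 — 3 statements merged into one kernel-verified Lean document; each statement's English description precedes it below -/
import Mathlib

section
/- Let Δx, Δy > 0, let K = [−Δx/2, Δx/2] × [−Δy/2, Δy/2] ⊂ ℝ², and let f : ℝ² → ℝ be three times continuously differentiable on a neighborhood of K with all third-order partial derivatives bounded in absolute value by M on K. Then the net flux of f through the horizontal edges of K approximates ΔxΔy ∂_y f(0,0) to the following accuracy: |∫_{−Δx/2}^{Δx/2} ( f(x, Δy/2) − f(x, −Δy/2) ) dx − ΔxΔy ∂_y f(0,0)| ≤ (M/24)(Δx Δy³ + Δx³ Δy). -/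
/-!
Along the vertical line through `(x, 0)`, the central difference `f (x, b) - f (x, -b)` equals
`2b ∂_y f (x, 0)` up to `M b³ / 3`, since the even second-order Taylor terms at `±b` cancel.
Integrating `∂_y f (x, 0)` over `[-a, a]` gives `2a ∂_y f (0, 0)` up to `M a³ / 3`, since the
linear Taylor term is odd. With `a = Δx / 2`, `b = Δy / 2` the two errors add up to
`2a · M b³ / 3 + 2b · M a³ / 3 = M (Δx Δy³ + Δx³ Δy) / 24`.

All one-variable Taylor estimates come from integrating a bound `‖g'‖ ≤ C |t|ⁿ` with `g 0 = 0`.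
-/

open MeasureTheory intervalIntegral Set

section OneVariable

variable {F : Type*} [NormedAddCommGroup F] [NormedSpace ℝ F]

theorem norm_le_of_norm_deriv_le_pow_Icc_zero {g g' : ℝ → F} {C r : ℝ} {n : ℕ}
    (hg : ∀ t ∈ Icc 0 r, HasDerivAt g (g' t) t) (h0 : g 0 = 0)
    (hbound : ∀ t ∈ Icc 0 r, ‖g' t‖ ≤ C * t ^ n) :
    ∀ t ∈ Icc 0 r, ‖g t‖ ≤ C * t ^ (n + 1) / (n + 1) := by
  refine image_norm_le_of_norm_deriv_right_le_deriv_boundary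
    (fun t ht => (hg t ht).continuousAt.continuousWithinAt)
    (fun t ht => (hg t (Ico_subset_Icc_self ht)).hasDerivWithinAt) (by simp [h0])
    (fun t => ?_) (fun t ht => hbound t (Ico_subset_Icc_self ht))
  refine (((hasDerivAt_pow (n + 1) t).const_mul C).div_const ((n : ℝ) + 1)).congr_deriv ?_
  push_cast
  field_simp

theorem norm_le_of_norm_deriv_le_pow {g g' : ℝ → F} {C r : ℝ} {n : ℕ}
    (hg : ∀ t ∈ Icc (-r) r, HasDerivAt g (g' t) t) (h0 : g 0 = 0)
    (hbound : ∀ t ∈ Icc (-r) r, ‖g' t‖ ≤ C * |t| ^ n) :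
    ∀ t ∈ Icc (-r) r, ‖g t‖ ≤ C * |t| ^ (n + 1) / (n + 1) := by
  intro t ht
  have hr : 0 ≤ r := by linarith [ht.1, ht.2]
  have hsub : Icc 0 r ⊆ Icc (-r) r := Icc_subset_Icc (by linarith) le_rfl
  have hneg : ∀ s ∈ Icc 0 r, -s ∈ Icc (-r) r := fun s hs => ⟨neg_le_neg hs.2, by linarith [hs.1]⟩
  rcases le_total 0 t with h | h
  · rw [abs_of_nonneg h]
    refine norm_le_of_norm_deriv_le_pow_Icc_zero (fun s hs => hg s (hsub hs)) h0
      (fun s hs => ?_) t ⟨h, ht.2⟩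
    simpa [abs_of_nonneg hs.1] using hbound s (hsub hs)
  · rw [abs_of_nonpos h]
    have hrefl : ∀ s ∈ Icc 0 r, HasDerivAt (fun s => g (-s)) (-g' (-s)) s := fun s hs => by
      simpa [Function.comp_def] using (hg (-s) (hneg s hs)).scomp s (hasDerivAt_neg s)
    simpa using norm_le_of_norm_deriv_le_pow_Icc_zero hrefl (by simp [h0])
      (fun s hs => by simpa [abs_of_nonneg hs.1] using hbound (-s) (hneg s hs)) (-t)
      ⟨by linarith, by linarith [ht.1]⟩

theorem norm_taylor_remainder_one_le {u u' u'' : ℝ → F} {C r : ℝ}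
    (hu : ∀ t ∈ Icc (-r) r, HasDerivAt u (u' t) t)
    (hu' : ∀ t ∈ Icc (-r) r, HasDerivAt u' (u'' t) t)
    (hC : ∀ t ∈ Icc (-r) r, ‖u'' t‖ ≤ C) :
    ∀ t ∈ Icc (-r) r, ‖u t - u 0 - t • u' 0‖ ≤ C * |t| ^ 2 / 2 := by
  have hu'_sub : ∀ t ∈ Icc (-r) r, ‖u' t - u' 0‖ ≤ C * |t| ^ 1 := fun t ht => by
    simpa using norm_le_of_norm_deriv_le_pow (n := 0) (g := fun s => u' s - u' 0)
      (fun s hs => (hu' s hs).sub_const _) (sub_self _) (fun s hs => by simpa using hC s hs) t ht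
  have := norm_le_of_norm_deriv_le_pow (n := 1) (g := fun s => u s - u 0 - s • u' 0)
    (fun s hs => ((hu s hs).sub_const _).sub ((hasDerivAt_id s).smul_const (u' 0)) |>.congr_deriv
      (by simp)) (by simp) hu'_sub
  intro t ht
  simpa [one_add_one_eq_two] using this t ht

theorem norm_taylor_remainder_two_le {u u' u'' u''' : ℝ → F} {C r : ℝ}
    (hu : ∀ t ∈ Icc (-r) r, HasDerivAt u (u' t) t)
    (hu' : ∀ t ∈ Icc (-r) r, HasDerivAt u' (u'' t) t)
    (hu'' : ∀ t ∈ Icc (-r) r, HasDerivAt u'' (u''' t) t)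
    (hC : ∀ t ∈ Icc (-r) r, ‖u''' t‖ ≤ C) :
    ∀ t ∈ Icc (-r) r, ‖u t - u 0 - t • u' 0 - (t ^ 2 / 2) • u'' 0‖ ≤ C * |t| ^ 3 / 6 := by
  have hpoly : ∀ s : ℝ, HasDerivAt (fun s : ℝ => (s ^ 2 / 2) • u'' 0) (s • u'' 0) s := fun s =>
    (((hasDerivAt_pow 2 s).div_const 2).smul_const (u'' 0)).congr_deriv (by simp)
  have := norm_le_of_norm_deriv_le_pow (n := 2) (C := C / 2)
    (g := fun s => u s - u 0 - s • u' 0 - (s ^ 2 / 2) • u'' 0)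
    (fun s hs => (((hu s hs).sub_const _).sub ((hasDerivAt_id s).smul_const (u' 0))).sub (hpoly s)
      |>.congr_deriv (by simp)) (by simp)
    (fun s hs => (norm_taylor_remainder_one_le hu' hu'' hC s hs).trans_eq (by ring))
  intro t ht
  convert this t ht using 1
  ring

theorem norm_central_difference_sub_le {u u' u'' u''' : ℝ → F} {C r : ℝ} (hr : 0 ≤ r)
    (hu : ∀ t ∈ Icc (-r) r, HasDerivAt u (u' t) t)
    (hu' : ∀ t ∈ Icc (-r) r, HasDerivAt u' (u'' t) t)
    (hu'' : ∀ t ∈ Icc (-r) r, HasDerivAt u'' (u''' t) t)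
    (hC : ∀ t ∈ Icc (-r) r, ‖u''' t‖ ≤ C) :
    ‖u r - u (-r) - (2 * r) • u' 0‖ ≤ C * r ^ 3 / 3 := by
  have hright := norm_taylor_remainder_two_le hu hu' hu'' hC r ⟨by linarith, le_rfl⟩
  have hleft := norm_taylor_remainder_two_le hu hu' hu'' hC (-r) ⟨le_rfl, by linarith⟩
  rw [abs_neg, abs_of_nonneg hr] at *
  calc ‖u r - u (-r) - (2 * r) • u' 0‖
      = ‖(u r - u 0 - r • u' 0 - (r ^ 2 / 2) • u'' 0)
          - (u (-r) - u 0 - (-r) • u' 0 - ((-r) ^ 2 / 2) • u'' 0)‖ := by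
        congr 1; module
    _ ≤ C * r ^ 3 / 6 + C * r ^ 3 / 6 := (norm_sub_le _ _).trans (add_le_add hright hleft)
    _ = C * r ^ 3 / 3 := by ring

theorem norm_integral_sub_midpoint_le [CompleteSpace F] {u u' u'' : ℝ → F} {C r : ℝ}
    (hr : 0 ≤ r) (hu : ∀ t ∈ Icc (-r) r, HasDerivAt u (u' t) t)
    (hu' : ∀ t ∈ Icc (-r) r, HasDerivAt u' (u'' t) t)
    (hC : ∀ t ∈ Icc (-r) r, ‖u'' t‖ ≤ C) :
    ‖(∫ t in -r..r, u t) - (2 * r) • u 0‖ ≤ C * r ^ 3 / 3 := by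
  have hr' : -r ≤ r := by linarith
  have hint : IntervalIntegrable u volume (-r) r :=
    ContinuousOn.intervalIntegrable fun t ht =>
      (hu t (by rwa [uIcc_of_le hr'] at ht)).continuousAt.continuousWithinAt
  have hremainder : (∫ t in -r..r, u t - u 0 - t • u' 0) = (∫ t in -r..r, u t) - (2 * r) • u 0 := by
    rw [integral_sub (hint.sub intervalIntegrable_const)
        ((by fun_prop : Continuous fun t : ℝ => t • u' 0).intervalIntegrable _ _),
      integral_sub hint intervalIntegrable_const, intervalIntegral.integral_const,
      intervalIntegral.integral_smul_const, integral_id]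
    simp only [neg_sq, sub_self, zero_div, zero_smul, sub_zero, sub_neg_eq_add, two_mul]
  rw [← hremainder]
  calc ‖∫ t in -r..r, u t - u 0 - t • u' 0‖ ≤ ∫ t in -r..r, C * |t| ^ 2 / 2 :=
        norm_integral_le_of_norm_le hr' (Filter.Eventually.of_forall fun t ht =>
          norm_taylor_remainder_one_le hu hu' hC t (Ioc_subset_Icc_self ht))
          ((by fun_prop : Continuous fun t : ℝ => C * |t| ^ 2 / 2).intervalIntegrable _ _)
    _ = C * r ^ 3 / 3 := by
        simp only [sq_abs, intervalIntegral.integral_div, intervalIntegral.integral_const_mul,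
          integral_pow]
        ring

theorem norm_integral_sub_smul_le {g φ : ℝ → F} {L : F} {a c A B : ℝ} (ha : 0 ≤ a)
    (hg : IntervalIntegrable g volume (-a) a) (hφ : IntervalIntegrable φ volume (-a) a)
    (hgφ : ∀ s ∈ Icc (-a) a, ‖g s - c • φ s‖ ≤ A) (hφL : ‖(∫ s in -a..a, φ s) - L‖ ≤ B) :
    ‖(∫ s in -a..a, g s) - c • L‖ ≤ 2 * a * A + |c| * B := by
  have hsplit : (∫ s in -a..a, g s) - c • L
      = (∫ s in -a..a, g s - c • φ s) + c • ((∫ s in -a..a, φ s) - L) := by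
    have hcφ : IntervalIntegrable (fun s => c • φ s) volume (-a) a := hφ.smul c
    rw [integral_sub hg hcφ, intervalIntegral.integral_smul]
    module
  have hpointwise : ‖∫ s in -a..a, g s - c • φ s‖ ≤ A * (2 * a) := by
    refine (norm_integral_le_of_norm_le_const fun s hs => hgφ s ?_).trans_eq ?_
    · rw [uIoc_of_le (by linarith)] at hs
      exact Ioc_subset_Icc_self hs
    · rw [abs_of_nonneg (by linarith)]
      ring
  rw [hsplit, ← Real.norm_eq_abs]
  refine (norm_add_le _ _).trans (add_le_add (hpointwise.trans_eq (mul_comm _ _)) ?_)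
  rw [norm_smul]
  exact mul_le_mul_of_nonneg_left hφL (norm_nonneg c)

end OneVariable

section Lines

variable {E F : Type*} [NormedAddCommGroup E] [NormedSpace ℝ E] [NormedAddCommGroup F]
  [NormedSpace ℝ F] {f : E → F} {U : Set E}

theorem ContDiffOn.hasDerivAt_iteratedFDeriv_line {n : WithTop ℕ∞} {k : ℕ}
    (hf : ContDiffOn ℝ n f U) (hU : IsOpen U) (hk : (k : WithTop ℕ∞) < n) {p v : E} {t : ℝ}
    (ht : p + t • v ∈ U) (w : Fin k → E) :
    HasDerivAt (fun s : ℝ => iteratedFDeriv ℝ k f (p + s • v) w)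
      (iteratedFDeriv ℝ (k + 1) f (p + t • v) (Fin.cons v w)) t := by
  have hline : HasDerivAt (fun s : ℝ => p + s • v) v t := by
    simpa using ((hasDerivAt_id t).smul_const v).const_add p
  have hD := ((hf.contDiffAt (hU.mem_nhds ht)).differentiableAt_iteratedFDeriv
    hk).hasFDerivAt.comp_hasDerivAt t hline
  rw [iteratedFDeriv_succ_apply_left]
  simpa [Function.comp_def] using
    (ContinuousMultilinearMap.apply ℝ (fun _ : Fin k => E) F w).hasFDerivAt.comp_hasDerivAt t hD

theorem ContDiffOn.norm_central_difference_sub_fderiv_le (hf : ContDiffOn ℝ 3 f U)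
    (hU : IsOpen U) {p v : E} {C r : ℝ} (hr : 0 ≤ r) (hline : ∀ t ∈ Icc (-r) r, p + t • v ∈ U)
    (hC : ∀ t ∈ Icc (-r) r, ‖iteratedFDeriv ℝ 3 f (p + t • v) ![v, v, v]‖ ≤ C) :
    ‖f (p + r • v) - f (p + (-r) • v) - (2 * r) • fderiv ℝ f p v‖ ≤ C * r ^ 3 / 3 := by
  simpa using norm_central_difference_sub_le (u := fun s => iteratedFDeriv ℝ 0 f (p + s • v) ![])
    (u' := fun s => iteratedFDeriv ℝ 1 f (p + s • v) ![v])
    (u'' := fun s => iteratedFDeriv ℝ 2 f (p + s • v) ![v, v]) hr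
    (fun t ht => hf.hasDerivAt_iteratedFDeriv_line hU (by norm_num) (hline t ht) ![])
    (fun t ht => hf.hasDerivAt_iteratedFDeriv_line hU (by norm_num) (hline t ht) ![v])
    (fun t ht => hf.hasDerivAt_iteratedFDeriv_line hU (by norm_num) (hline t ht) ![v, v]) hC

theorem ContDiffOn.norm_integral_fderiv_sub_le [CompleteSpace F] (hf : ContDiffOn ℝ 3 f U)
    (hU : IsOpen U) {p v w : E} {C r : ℝ} (hr : 0 ≤ r) (hline : ∀ t ∈ Icc (-r) r, p + t • v ∈ U)
    (hC : ∀ t ∈ Icc (-r) r, ‖iteratedFDeriv ℝ 3 f (p + t • v) ![v, v, w]‖ ≤ C) :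
    ‖(∫ t in -r..r, fderiv ℝ f (p + t • v) w) - (2 * r) • fderiv ℝ f p w‖ ≤ C * r ^ 3 / 3 := by
  simpa using norm_integral_sub_midpoint_le
    (u := fun s => iteratedFDeriv ℝ 1 f (p + s • v) ![w])
    (u' := fun s => iteratedFDeriv ℝ 2 f (p + s • v) ![v, w]) hr
    (fun t ht => hf.hasDerivAt_iteratedFDeriv_line hU (by norm_num) (hline t ht) ![w])
    (fun t ht => hf.hasDerivAt_iteratedFDeriv_line hU (by norm_num) (hline t ht) ![v, w]) hC

end Lines

theorem ContDiffOn.norm_integral_edge_flux_sub_le {E F : Type*} [NormedAddCommGroup E]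
    [NormedSpace ℝ E] [NormedAddCommGroup F] [NormedSpace ℝ F] [CompleteSpace F] {f : E → F}
    {U : Set E} (hf : ContDiffOn ℝ 3 f U) (hU : IsOpen U) {p v w : E} {M a b : ℝ}
    (ha : 0 ≤ a) (hb : 0 ≤ b) (hK : ∀ s ∈ Icc (-a) a, ∀ t ∈ Icc (-b) b, p + s • v + t • w ∈ U)
    (hMw : ∀ s ∈ Icc (-a) a, ∀ t ∈ Icc (-b) b,
      ‖iteratedFDeriv ℝ 3 f (p + s • v + t • w) ![w, w, w]‖ ≤ M)
    (hMv : ∀ s ∈ Icc (-a) a, ‖iteratedFDeriv ℝ 3 f (p + s • v) ![v, v, w]‖ ≤ M) :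
    ‖(∫ s in -a..a, f (p + s • v + b • w) - f (p + s • v + (-b) • w))
        - (2 * a * (2 * b)) • fderiv ℝ f p w‖ ≤ 2 * M / 3 * (a * b ^ 3 + a ^ 3 * b) := by
  have hmid : ∀ s ∈ Icc (-a) a, p + s • v ∈ U := fun s hs => by
    simpa using hK s hs 0 ⟨by linarith, hb⟩
  have hIcc : uIcc (-a) a = Icc (-a) a := uIcc_of_le (by linarith)
  have hφ : IntervalIntegrable (fun s => fderiv ℝ f (p + s • v) w) volume (-a) a :=
    ContinuousOn.intervalIntegrable fun s hs => by
      rw [hIcc] at hs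
      simpa using (hf.hasDerivAt_iteratedFDeriv_line hU (k := 1) (by norm_num) (hmid s hs)
        ![w]).continuousAt.continuousWithinAt
  have hg : IntervalIntegrable (fun s => f (p + s • v + b • w) - f (p + s • v + (-b) • w))
      volume (-a) a := by
    refine ContinuousOn.intervalIntegrable (ContinuousOn.sub ?_ ?_) <;> rw [hIcc] <;>
      refine hf.continuousOn.comp (by fun_prop) fun s hs => hK s hs _ ?_
    exacts [⟨by linarith, le_rfl⟩, ⟨le_rfl, by linarith⟩]
  have hflux := norm_integral_sub_smul_le ha hg hφ
    (fun s hs => hf.norm_central_difference_sub_fderiv_le hU hb (hK s hs) (hMw s hs))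
    (hf.norm_integral_fderiv_sub_le hU ha hmid hMv)
  rw [abs_of_nonneg (by linarith : (0 : ℝ) ≤ 2 * b), smul_smul, mul_comm (2 * b)] at hflux
  exact hflux.trans_eq (by ring)

/-- accuracy of the horizontal-edge flux quadrature
for a C³ function on the rectangle K = [−Δx/2, Δx/2] × [−Δy/2, Δy/2]. -/
theorem edge_flux_quadrature
    (Δx Δy : ℝ) (hΔx : 0 < Δx) (hΔy : 0 < Δy)
    (K : Set (ℝ × ℝ))
    (hK : K = Set.Icc ((-(Δx / 2), -(Δy / 2)) : ℝ × ℝ) ((Δx / 2, Δy / 2) : ℝ × ℝ))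
    (f : ℝ × ℝ → ℝ) (U : Set (ℝ × ℝ)) (hU : IsOpen U) (hKU : K ⊆ U)
    (hf : ContDiffOn ℝ 3 f U) (M : ℝ)
    (hM : ∀ x ∈ K, ∀ v w z : ℝ × ℝ,
      (v = ((1 : ℝ), (0 : ℝ)) ∨ v = ((0 : ℝ), (1 : ℝ))) →
      (w = ((1 : ℝ), (0 : ℝ)) ∨ w = ((0 : ℝ), (1 : ℝ))) →
      (z = ((1 : ℝ), (0 : ℝ)) ∨ z = ((0 : ℝ), (1 : ℝ))) →
      |iteratedFDeriv ℝ 3 f x ![v, w, z]| ≤ M) :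
    |(∫ x in (-(Δx / 2))..(Δx / 2), (f (x, Δy / 2) - f (x, -(Δy / 2))))
        - Δx * Δy * fderiv ℝ f ((0 : ℝ), (0 : ℝ)) ((0 : ℝ), (1 : ℝ))|
      ≤ M / 24 * (Δx * Δy ^ 3 + Δx ^ 3 * Δy) := by
  have hpoint : ∀ s t : ℝ, (0 : ℝ × ℝ) + s • ((1 : ℝ), (0 : ℝ)) + t • ((0 : ℝ), (1 : ℝ)) = (s, t) :=
    fun s t => by ext <;> simp
  have hmem : ∀ s ∈ Icc (-(Δx / 2)) (Δx / 2), ∀ t ∈ Icc (-(Δy / 2)) (Δy / 2), (s, t) ∈ K :=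
    fun s hs t ht => hK ▸ ⟨⟨hs.1, ht.1⟩, hs.2, ht.2⟩
  have hflux := hf.norm_integral_edge_flux_sub_le hU (p := 0) (v := ((1 : ℝ), (0 : ℝ)))
    (w := ((0 : ℝ), (1 : ℝ))) (a := Δx / 2) (b := Δy / 2) (by linarith) (by linarith)
    (fun s hs t ht => by rw [hpoint]; exact hKU (hmem s hs t ht))
    (fun s hs t ht => by
      rw [hpoint]
      exact hM _ (hmem s hs t ht) _ _ _ (.inr rfl) (.inr rfl) (.inr rfl))
    (fun s hs => by
      simpa [hpoint] using
        hM _ (hmem s hs 0 ⟨by linarith, by linarith⟩) _ _ _ (.inl rfl) (.inl rfl) (.inr rfl))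
  simp only [hpoint, Real.norm_eq_abs, smul_eq_mul] at hflux
  rw [Prod.mk_zero_zero]
  convert hflux.trans_eq (by ring : _ = M / 24 * (Δx * Δy ^ 3 + Δx ^ 3 * Δy)) using 2
  ring
end

section
/- Let Ω ⊆ ℝ², let Z_T, Z_Λ : Ω → ℝ be differentiable, and let M_T, M_Λ > 0 be such that ‖∇Z_T(x)‖ ≤ M_T and ‖∇Z_Λ(x)‖ ≤ M_Λ for all x ∈ Ω. Then there exists a constant C > 0, depending only on M_T and M_Λ, such that for every ε > 0, if ‖∇Z_T(x) − ∇Z_Λ(x)‖ ≤ ε for all x ∈ Ω, then the Beltrami coefficients satisfy |μ_T(x) − μ_Λ(x)| ≤ Cε for all x ∈ Ω. -/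
/-!
For a graph `(x, y, Z(x, y))` put `w = ∂ₓZ + i ∂_yZ`. Then `EG − F² = 1 + |w|²`, and since
`E + G + 2√(EG − F²) = (1 + √(1 + |w|²))²` and `E − G + 2iF = w²`, the Beltrami coefficient is
`μ = φ(w)²` with `φ(w) = w / (1 + √(1 + |w|²))`. The map `φ` sends `ℂ` into the closed unit disk
and is `1`-Lipschitz, so `|μ_T − μ_Λ| ≤ 2 |φ(w_T) − φ(w_Λ)| ≤ 2 |w_T − w_Λ|`, and `|w_T − w_Λ|` is
the operator norm of `DZ_T − DZ_Λ`. Hence `C = 2` works.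
-/

noncomputable section

/-- Partial derivative of `Z : ℝ² → ℝ` in the `i`-th coordinate direction. -/
def pd (Z : EuclideanSpace ℝ (Fin 2) → ℝ) (i : Fin 2) (x : EuclideanSpace ℝ (Fin 2)) : ℝ :=
  fderiv ℝ Z x (EuclideanSpace.single i 1)

/-- The Beltrami coefficient `μ = (E − G + 2iF)/(E + G + 2√(EG − F²))`. -/
def beltramiCoeff (E F G : ℝ) : ℂ :=
  (↑(E - G) + 2 * Complex.I * ↑F) / (↑(E + G) + 2 * ↑(Real.sqrt (E * G - F ^ 2)))

/-- The Beltrami coefficient of the graph surface of the height function `Z`,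
built from `E = 1 + (∂ₓZ)²`, `F = (∂ₓZ)(∂_yZ)`, `G = 1 + (∂_yZ)²`. -/
def muOf (Z : EuclideanSpace ℝ (Fin 2) → ℝ) (x : EuclideanSpace ℝ (Fin 2)) : ℂ :=
  beltramiCoeff (1 + pd Z 0 x ^ 2) (pd Z 0 x * pd Z 1 x) (1 + pd Z 1 x ^ 2)

open Complex

theorem norm_eq_sqrt_sum_apply_single_sq {ι : Type*} [Fintype ι] [DecidableEq ι]
    (L : StrongDual ℝ (EuclideanSpace ℝ ι)) :
    ‖L‖ = √(∑ i, L (EuclideanSpace.single i 1) ^ 2) := by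
  have hg (i : ι) : L (EuclideanSpace.single i 1) =
      (InnerProductSpace.toDual ℝ (EuclideanSpace ℝ ι)).symm L i := by
    rw [← InnerProductSpace.toDual_symm_apply, EuclideanSpace.inner_single_right]
    simp
  rw [← (InnerProductSpace.toDual ℝ _).symm.norm_map L, EuclideanSpace.norm_eq]
  simp [hg]

theorem one_le_sqrt_one_add_sq (x : ℝ) : 1 ≤ √(1 + x ^ 2) :=
  Real.one_le_sqrt.mpr (by nlinarith [sq_nonneg x])

-- `√(1 + t²) = ‖1 + t i‖`, so this is the reverse triangle inequality in `ℂ`.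
theorem abs_sqrt_one_add_sq_sub_le (x y : ℝ) : |√(1 + x ^ 2) - √(1 + y ^ 2)| ≤ |x - y| := by
  have hdiff : ((1 : ℝ) + x * I : ℂ) - ((1 : ℝ) + y * I) = ((x - y : ℝ) : ℂ) * I := by
    push_cast; ring
  have h := abs_norm_sub_norm_le ((1 : ℝ) + x * I) ((1 : ℝ) + y * I)
  rwa [norm_add_mul_I, norm_add_mul_I, one_pow, hdiff, norm_mul, norm_I, mul_one, norm_real,
    Real.norm_eq_abs] at h

theorem norm_sq_sub_sq_le {R : Type*} [NormedCommRing R] {a b : R} (ha : ‖a‖ ≤ 1) (hb : ‖b‖ ≤ 1) :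
    ‖a ^ 2 - b ^ 2‖ ≤ 2 * ‖a - b‖ := by
  rw [sq_sub_sq]
  calc ‖(a + b) * (a - b)‖ ≤ ‖a + b‖ * ‖a - b‖ := norm_mul_le _ _
    _ ≤ 2 * ‖a - b‖ := by
      gcongr
      linarith [norm_add_le a b]

def toDisk (w : ℂ) : ℂ := w / ((1 + √(1 + ‖w‖ ^ 2) : ℝ) : ℂ)

theorem norm_toDisk_le_one (w : ℂ) : ‖toDisk w‖ ≤ 1 := by
  have hw : ‖w‖ ≤ √(1 + ‖w‖ ^ 2) := Real.le_sqrt_of_sq_le (by linarith)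
  rw [toDisk, norm_div, norm_real, Real.norm_eq_abs, abs_of_pos (by positivity),
    div_le_one (by positivity)]
  linarith

theorem norm_toDisk_sub_le (a b : ℂ) : ‖toDisk a - toDisk b‖ ≤ ‖a - b‖ := by
  set sa := √(1 + ‖a‖ ^ 2) with hsa_def
  set sb := √(1 + ‖b‖ ^ 2) with hsb_def
  have hsa : 1 ≤ sa := one_le_sqrt_one_add_sq ‖a‖
  have hsb : 1 ≤ sb := one_le_sqrt_one_add_sq ‖b‖
  have hs : |sb - sa| ≤ ‖a - b‖ :=
    (abs_sqrt_one_add_sq_sub_le _ _).trans (by rw [abs_sub_comm]; exact abs_norm_sub_norm_le a b)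
  have hsplit : toDisk a - toDisk b =
      ((a - b) + toDisk b * ((sb - sa : ℝ) : ℂ)) / ((1 + sa : ℝ) : ℂ) := by
    have : ((1 + sa : ℝ) : ℂ) ≠ 0 := by exact_mod_cast (by positivity : (1 + sa) ≠ 0)
    have : ((1 + sb : ℝ) : ℂ) ≠ 0 := by exact_mod_cast (by positivity : (1 + sb) ≠ 0)
    simp only [toDisk]
    rw [← hsa_def, ← hsb_def]
    field_simp
    push_cast
    ring
  rw [hsplit, norm_div, norm_real, Real.norm_eq_abs, abs_of_pos (by positivity),
    div_le_iff₀ (by positivity)]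
  calc ‖a - b + toDisk b * ((sb - sa : ℝ) : ℂ)‖ ≤ ‖a - b‖ + 1 * |sb - sa| := by
        refine (norm_add_le _ _).trans ?_
        rw [norm_mul, norm_real, Real.norm_eq_abs]
        gcongr
        exact norm_toDisk_le_one b
    _ ≤ ‖a - b‖ * (1 + sa) := by nlinarith [norm_nonneg (a - b)]

theorem beltramiCoeff_graph (w : ℂ) :
    beltramiCoeff (1 + w.re ^ 2) (w.re * w.im) (1 + w.im ^ 2) = toDisk w ^ 2 := by
  have hnorm : ‖w‖ ^ 2 = w.re ^ 2 + w.im ^ 2 := by rw [Complex.sq_norm, normSq_apply]; ring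
  have hdet : (1 + w.re ^ 2) * (1 + w.im ^ 2) - (w.re * w.im) ^ 2 = 1 + ‖w‖ ^ 2 := by
    rw [hnorm]; ring
  set s := √(1 + ‖w‖ ^ 2) with hs
  have hs2 : s ^ 2 = 1 + w.re ^ 2 + w.im ^ 2 := by
    rw [hs, Real.sq_sqrt (by positivity), hnorm]; ring
  rw [beltramiCoeff, hdet, ← hs, toDisk, div_pow]
  congr 1
  · conv_rhs => rw [← re_add_im w]
    push_cast
    linear_combination (-(w.im : ℂ) ^ 2) * I_sq
  · have hs2' : (s : ℂ) ^ 2 = 1 + (w.re : ℂ) ^ 2 + (w.im : ℂ) ^ 2 := by exact_mod_cast hs2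
    push_cast
    linear_combination -hs2'

def complexGradient (Z : EuclideanSpace ℝ (Fin 2) → ℝ) (x : EuclideanSpace ℝ (Fin 2)) : ℂ :=
  pd Z 0 x + pd Z 1 x * I

theorem muOf_eq_toDisk_sq (Z : EuclideanSpace ℝ (Fin 2) → ℝ) (x : EuclideanSpace ℝ (Fin 2)) :
    muOf Z x = toDisk (complexGradient Z x) ^ 2 := by
  rw [muOf, ← beltramiCoeff_graph]
  simp [complexGradient]

theorem norm_complexGradient_sub (Z₁ Z₂ : EuclideanSpace ℝ (Fin 2) → ℝ)
    (x : EuclideanSpace ℝ (Fin 2)) :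
    ‖complexGradient Z₁ x - complexGradient Z₂ x‖ = ‖fderiv ℝ Z₁ x - fderiv ℝ Z₂ x‖ := by
  rw [norm_eq_sqrt_sum_apply_single_sq, Fin.sum_univ_two, ← norm_add_mul_I]
  congr 1
  simp only [complexGradient, pd, sub_apply]
  push_cast
  ring

theorem beltrami_coeff_close_general
    (MT MΛ : ℝ) :
    ∃ C > 0,
      ∀ (Ω : Set (EuclideanSpace ℝ (Fin 2)))
        (ZT ZΛ : EuclideanSpace ℝ (Fin 2) → ℝ),
        (∀ x ∈ Ω, DifferentiableAt ℝ ZT x) →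
        (∀ x ∈ Ω, DifferentiableAt ℝ ZΛ x) →
        (∀ x ∈ Ω, ‖fderiv ℝ ZT x‖ ≤ MT) →
        (∀ x ∈ Ω, ‖fderiv ℝ ZΛ x‖ ≤ MΛ) →
        ∀ ε > 0,
          (∀ x ∈ Ω, ‖fderiv ℝ ZT x - fderiv ℝ ZΛ x‖ ≤ ε) →
          ∀ x ∈ Ω, ‖muOf ZT x - muOf ZΛ x‖ ≤ C * ε := by
  refine ⟨2, two_pos, fun Ω ZT ZΛ _ _ _ _ ε _ hclose x hx => ?_⟩
  rw [muOf_eq_toDisk_sq, muOf_eq_toDisk_sq]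
  calc ‖toDisk (complexGradient ZT x) ^ 2 - toDisk (complexGradient ZΛ x) ^ 2‖
      ≤ 2 * ‖toDisk (complexGradient ZT x) - toDisk (complexGradient ZΛ x)‖ :=
        norm_sq_sub_sq_le (norm_toDisk_le_one _) (norm_toDisk_le_one _)
    _ ≤ 2 * ‖complexGradient ZT x - complexGradient ZΛ x‖ := by
        gcongr; exact norm_toDisk_sub_le _ _
    _ = 2 * ‖fderiv ℝ ZT x - fderiv ℝ ZΛ x‖ := by rw [norm_complexGradient_sub]
    _ ≤ 2 * ε := by gcongr; exact hclose x hx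

/-- there is a constant `C > 0` depending only on the gradient
bounds `M_T`, `M_Λ` such that, whenever the gradients of the two height
functions are uniformly `ε`-close on `Ω`, the Beltrami coefficients of the two
graph surfaces are `Cε`-close on `Ω`. -/
theorem beltrami_coeff_close
    (MT MΛ : ℝ) (hMT : 0 < MT) (hMΛ : 0 < MΛ) :
    ∃ C > 0,
      ∀ (Ω : Set (EuclideanSpace ℝ (Fin 2)))
        (ZT ZΛ : EuclideanSpace ℝ (Fin 2) → ℝ),
        (∀ x ∈ Ω, DifferentiableAt ℝ ZT x) →
        (∀ x ∈ Ω, DifferentiableAt ℝ ZΛ x) →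
        (∀ x ∈ Ω, ‖fderiv ℝ ZT x‖ ≤ MT) →
        (∀ x ∈ Ω, ‖fderiv ℝ ZΛ x‖ ≤ MΛ) →
        ∀ ε > 0,
          (∀ x ∈ Ω, ‖fderiv ℝ ZT x - fderiv ℝ ZΛ x‖ ≤ ε) →
          ∀ x ∈ Ω, ‖muOf ZT x - muOf ZΛ x‖ ≤ C * ε :=
  beltrami_coeff_close_general MT MΛ
end
end

section
/- Let E, F, G be real numbers with E > 0 and EG − F² > 0, let g be the symmetric positive-definite 2×2 matrix with rows (E, F) and (F, G), and let μ = (E − G + 2iF)/(E + G + 2√(EG − F²)). Let a, b, c, d be real numbers (representing ∂ₓr₁, ∂_yr₁, ∂ₓr₂, ∂_yr₂) satisfying the Beltrami equation in complex form: (a − d) + i(c + b) = μ · ((a + d) + i(c − b)). Set u = (a, b) and v = (c, d). Then the coordinates (r₁, r₂) are conformal for g at this point: uᵀ g⁻¹ v = 0 and uᵀ g⁻¹ u = vᵀ g⁻¹ v. -/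
open Matrix

/-- if the gradients `u = (a, b) = ∇r₁` and `v = (c, d) = ∇r₂`
satisfy the Beltrami equation in complex (Wirtinger) form
`(a − d) + i(c + b) = μ ((a + d) + i(c − b))` with
`μ = (E − G + 2iF)/(E + G + 2√(EG − F²))`, then the coordinates `(r₁, r₂)` are
conformal for the metric `g = [[E, F], [F, G]]`: `uᵀ g⁻¹ v = 0` and
`uᵀ g⁻¹ u = vᵀ g⁻¹ v`. -/
theorem beltrami_implies_isothermal
    (E F G : ℝ) (hE : 0 < E) (hEGF : 0 < E * G - F ^ 2)
    (a b c d : ℝ)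
    (hbel : (↑(a - d) + Complex.I * ↑(c + b)) =
      ((↑(E - G) + 2 * Complex.I * ↑F) /
          (↑(E + G) + 2 * ↑(Real.sqrt (E * G - F ^ 2)))) *
        (↑(a + d) + Complex.I * ↑(c - b))) :
    ![a, b] ⬝ᵥ ((!![E, F; F, G] : Matrix (Fin 2) (Fin 2) ℝ)⁻¹ *ᵥ ![c, d]) = 0 ∧
    ![a, b] ⬝ᵥ ((!![E, F; F, G] : Matrix (Fin 2) (Fin 2) ℝ)⁻¹ *ᵥ ![a, b]) =
      ![c, d] ⬝ᵥ ((!![E, F; F, G] : Matrix (Fin 2) (Fin 2) ℝ)⁻¹ *ᵥ ![c, d]) := by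
  set s := Real.sqrt (E * G - F ^ 2) with hsdef
  have hs : s ^ 2 = E * G - F ^ 2 := Real.sq_sqrt hEGF.le
  have hspos : 0 < s := Real.sqrt_pos.2 hEGF
  have hG : 0 < G := by nlinarith [sq_nonneg F]
  have hden : ((E + G : ℝ) : ℂ) + 2 * (s : ℂ) ≠ 0 := by
    have : ((E + G : ℝ) : ℂ) + 2 * (s : ℂ) = ((E + G + 2 * s : ℝ) : ℂ) := by push_cast; ring
    rw [this, Complex.ofReal_ne_zero]
    positivity
  rw [div_mul_eq_mul_div, eq_div_iff hden] at hbel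
  obtain ⟨h1, h2⟩ := Complex.ext_iff.mp hbel
  simp only [Complex.add_re, Complex.add_im, Complex.mul_re, Complex.mul_im,
    Complex.ofReal_re, Complex.ofReal_im, Complex.I_re, Complex.I_im,
    Complex.ofReal_sub, Complex.ofReal_add, Complex.sub_re, Complex.sub_im,
    Complex.re_ofNat, Complex.im_ofNat] at h1 h2
  have h1' : a * (G + s) - d * (E + s) + F * c - F * b = 0 := by linear_combination h1 / 2
  have h2' : c * (G + s) + b * (E + s) - F * a - F * d = 0 := by linear_combination h2 / 2
  have hΔ : 0 < (G + s) * (E + s) - F ^ 2 := by nlinarith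
  have kA : G * a * c - F * (a * d) - F * (b * c) + E * (b * d) = 0 := by
    have hA : ((G + s) * (E + s) - F ^ 2) *
        (G * a * c - F * (a * d) - F * (b * c) + E * (b * d)) = 0 := by
      linear_combination (F*a*s + F*F*b + (-1)*E*b*s + (-1)*E*G*b) * h1' +
        (G*a*s + (-1)*F*b*s + (-1)*F*F*a + E*G*a) * h2' +
        ((-1)*G*a*b + F*b*b + (-1)*F*a*a + E*a*b) * hs
    exact (mul_eq_zero.mp hA).resolve_left hΔ.ne'
  have kB : G * a ^ 2 - 2 * F * (a * b) + E * b ^ 2 =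
      G * c ^ 2 - 2 * F * (c * d) + E * d ^ 2 := by
    have hB : ((G + s) * (E + s) - F ^ 2) ^ 2 *
        ((G * a ^ 2 - 2 * F * (a * b) + E * b ^ 2) -
         (G * c ^ 2 - 2 * F * (c * d) + E * d ^ 2)) = 0 := by
      linear_combination
        ((2)*F*b*s*s*s + F*G*c*s*s + F*G*b*s*s + F*G*G*c*s + (-2)*F*F*d*s*s + (-4)*F*F*a*s*s + (-2)*F*F*G*d*s + (-4)*F*F*G*a*s + (-1)*F*F*G*G*a + (2)*F*F*F*b*s + (-1)*F*F*F*G*c + F*F*F*G*b + (2)*F*F*F*F*d + E*d*s*s*s + E*a*s*s*s + (2)*E*G*d*s*s + (3)*E*G*a*s*s + E*G*G*d*s + (3)*E*G*G*a*s + E*G*G*G*a + (2)*E*F*b*s*s + E*F*G*c*s + (-1)*E*F*G*b*s + E*F*G*G*c + (-1)*E*F*G*G*b + (-3)*E*F*F*d*s + (-1)*E*F*F*a*s + (-3)*E*F*F*G*d + E*E*d*s*s + (2)*E*E*G*d*s + E*E*G*G*d + E*E*F*b*s) * h1' +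
        ((-1)*G*c*s*s*s + G*b*s*s*s + (-1)*G*G*c*s*s + (2)*F*d*s*s*s + (2)*F*G*d*s*s + (-2)*F*G*a*s*s + (-1)*F*G*G*a*s + (-2)*F*F*b*s*s + F*F*G*c*s + F*F*G*b*s + (-2)*F*F*F*d*s + (4)*F*F*F*a*s + (2)*F*F*F*G*a + (-2)*F*F*F*F*b + (-2)*E*G*c*s*s + (3)*E*G*b*s*s + (-2)*E*G*G*c*s + (3)*E*F*d*s*s + (-1)*E*F*a*s*s + (3)*E*F*G*d*s + (-5)*E*F*G*a*s + (-2)*E*F*G*G*a + (-2)*E*F*F*b*s + E*F*F*G*c + (2)*E*F*F*G*b + (-1)*E*F*F*F*d + E*F*F*F*a + (-1)*E*E*G*c*s + (3)*E*E*G*b*s + (-1)*E*E*G*G*c + E*E*F*d*s + E*E*F*G*d + (-1)*E*E*F*G*a + (-1)*E*E*F*F*b + E*E*E*G*b) * h2' +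
        ((-1)*G*b*b*s*s + G*a*a*s*s + (2)*G*G*a*a*s + G*G*G*a*a + (-4)*F*a*b*s*s + (-4)*F*G*a*b*s + (-2)*F*G*G*a*b + (4)*F*F*b*b*s + (4)*F*F*a*a*s + F*F*G*b*b + (3)*F*F*G*a*a + (-4)*F*F*F*a*b + E*b*b*s*s + (-1)*E*a*a*s*s + (-2)*E*G*b*b*s + (-2)*E*G*a*a*s + (-1)*E*G*G*a*a + (-4)*E*F*a*b*s + (3)*E*F*F*b*b + E*F*F*a*a + (2)*E*E*b*b*s + (-1)*E*E*G*b*b + (-2)*E*E*F*a*b + E*E*E*b*b) * hs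
    have := (mul_eq_zero.mp hB).resolve_left (pow_ne_zero 2 hΔ.ne')
    linarith [this]
  have hdet : E * G - F * F ≠ 0 := by nlinarith
  have hM : (!![E, F; F, G] : Matrix (Fin 2) (Fin 2) ℝ)⁻¹ =
      (E * G - F * F)⁻¹ • !![G, -F; -F, E] := by
    rw [Matrix.inv_def]
    simp [Matrix.adjugate_fin_two, Matrix.det_fin_two_of, Ring.inverse_eq_inv']
  constructor
  · simp only [hM, Matrix.smul_mulVec, Matrix.mulVec, dotProduct,
      Fin.sum_univ_two, Matrix.cons_val', Matrix.cons_val_zero, Matrix.cons_val_one,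
      Matrix.head_cons, Matrix.empty_val', Matrix.cons_val_fin_one, Matrix.head_fin_const,
      Matrix.smul_apply, Matrix.of_apply, Pi.smul_apply, smul_eq_mul]
    linear_combination (E * G - F * F)⁻¹ * kA
  · simp only [hM, Matrix.smul_mulVec, Matrix.mulVec, dotProduct,
      Fin.sum_univ_two, Matrix.cons_val', Matrix.cons_val_zero, Matrix.cons_val_one,
      Matrix.head_cons, Matrix.empty_val', Matrix.cons_val_fin_one, Matrix.head_fin_const,
      Matrix.smul_apply, Matrix.of_apply, Pi.smul_apply, smul_eq_mul]
    linear_combination (E * G - F * F)⁻¹ * kB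
end
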